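/- The 3-fold blow-up of each of K_4^3, J_4, F_{3,2}^{++1}, and F_2 contains a copy of F_1. -/
import Mathlib


/-- The 3-graph `F_1` on `Fin 7` with `(a,b,c,d,e,f,g) = (0,...,6)`:
edges `{abe, ace, bce, abf, adf, bdf, cdg}`. -/
def F1 : Finset (Finset (Fin 7)) :=
  {{0, 1, 4}, {0, 2, 4}, {1, 2, 4}, {0, 1, 5}, {0, 3, 5}, {1, 3, 5}, {2, 3, 6}}

/-- The 3-fold blow-up of a 3-graph `H` on `Fin p`: vertices are `Fin p × Fin 3`,
and a triple is an edge iff its three vertices project to three distinct vertices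
of `H` forming an edge of `H`. -/
def blowup3 {p : ℕ} (H : Finset (Finset (Fin p))) : Finset (Finset (Fin p × Fin 3)) :=
  Finset.univ.filter (fun e => e.card = 3 ∧ e.image Prod.fst ∈ H)

/-- `H[3]` contains a copy of `F_1`. -/
def containsF1 {p : ℕ} (H : Finset (Finset (Fin p))) : Prop :=
  ∃ v : Fin 7 → Fin p × Fin 3, Function.Injective v ∧ ∀ e ∈ F1, e.image v ∈ blowup3 H

/-- `K_4^3` on `Fin 4`. -/
def K43 : Finset (Finset (Fin 4)) := {{0, 1, 2}, {0, 1, 3}, {0, 2, 3}, {1, 2, 3}}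

/-- `J_4` on `Fin 5` with universal vertex `0`. -/
def J4 : Finset (Finset (Fin 5)) :=
  {{0, 1, 2}, {0, 1, 3}, {0, 1, 4}, {0, 2, 3}, {0, 2, 4}, {0, 3, 4}}

/-- `F_{3,2}^{++1}` on `Fin 5` with `(1,2,3,4,5) = (0,1,2,3,4)`:
edges `{123, 124, 125, 345, 134, 135}`. -/
def F32pp1 : Finset (Finset (Fin 5)) :=
  {{0, 1, 2}, {0, 1, 3}, {0, 1, 4}, {2, 3, 4}, {0, 2, 3}, {0, 2, 4}}

/-- `F_2` on `Fin 6` with `(a,b,c,d,e,g) = (0,1,2,3,4,5)`: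
edges `{abe, ace, bce, ade, bde, cdg}`. -/
def F2 : Finset (Finset (Fin 6)) :=
  {{0, 1, 4}, {0, 2, 4}, {1, 2, 4}, {0, 3, 4}, {1, 3, 4}, {2, 3, 5}}

set_option maxRecDepth 8000 in
/-- The 3-fold blow-up of each of `K_4^3`, `J_4`, `F_{3,2}^{++1}`,
and `F_2` contains a copy of `F_1`. -/
theorem stmt_11 : containsF1 K43 ∧ containsF1 J4 ∧ containsF1 F32pp1 ∧ containsF1 F2 := by
  refine ⟨⟨![(0,0),(1,0),(2,0),(3,0),(3,1),(2,1),(0,1)], by decide, ?_⟩,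
    ⟨![(1,0),(2,0),(3,0),(4,0),(0,0),(0,1),(0,2)], by decide, ?_⟩,
    ⟨![(1,0),(2,0),(3,0),(4,0),(0,0),(0,1),(2,1)], by decide, ?_⟩,
    ⟨![(0,0),(1,0),(2,0),(3,0),(4,0),(4,1),(5,0)], by decide, ?_⟩⟩ <;>
  · simp only [blowup3, Finset.mem_filter, Finset.mem_univ, true_and]
    decide
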